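/- The Euler–Mascheroni constant satisfies γ = 2 − 2·ln 2 − ∑_{k=2}^∞ (ln(k/(k-1)) − 2/(2k-1)). -/
import Mathlib

open Filter Finset Real Topology

private lemma aux_log_le (k : ℕ) :
    Real.log (((k : ℝ) + 2) / ((k : ℝ) + 1)) ≤ 1 / ((k : ℝ) + 1) := by
  have h := Real.log_le_sub_one_of_pos (x := ((k : ℝ) + 2) / ((k : ℝ) + 1)) (by positivity)
  have hk : (0:ℝ) < (k : ℝ) + 1 := by positivity
  have : ((k : ℝ) + 2) / ((k : ℝ) + 1) - 1 = 1 / ((k : ℝ) + 1) := by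
    field_simp
    norm_num
  linarith [this ▸ h]

private lemma aux_le_log (k : ℕ) :
    1 / ((k : ℝ) + 2) ≤ Real.log (((k : ℝ) + 2) / ((k : ℝ) + 1)) := by
  have h := Real.one_sub_inv_le_log_of_pos (x := ((k : ℝ) + 2) / ((k : ℝ) + 1)) (by positivity)
  have hk : (0:ℝ) < (k : ℝ) + 2 := by positivity
  have hk1 : (0:ℝ) < (k : ℝ) + 1 := by positivity
  have : 1 - (((k : ℝ) + 2) / ((k : ℝ) + 1))⁻¹ = 1 / ((k : ℝ) + 2) := by
    rw [inv_div]
    field_simp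
    norm_num
  linarith [this ▸ h]

private lemma aux_abs (k : ℕ) :
    |Real.log (((k : ℝ) + 2) / ((k : ℝ) + 1)) - 2 / (2 * ((k : ℝ) + 2) - 1)| ≤
      2 / ((k : ℝ) + 1) ^ 2 := by
  have h1 := aux_log_le k
  have h2 := aux_le_log k
  have hk1 : (0:ℝ) < (k : ℝ) + 1 := by positivity
  have hk2 : (0:ℝ) < (k : ℝ) + 2 := by positivity
  have hk3 : (0:ℝ) < 2 * ((k : ℝ) + 2) - 1 := by nlinarith
  rw [abs_le]
  constructor
  · have : 2 / (2 * ((k : ℝ) + 2) - 1) - 1 / ((k : ℝ) + 2) ≤ 2 / ((k : ℝ) + 1) ^ 2 := by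
      rw [div_sub_div _ _ (ne_of_gt hk3) (ne_of_gt hk2), div_le_div_iff₀ (by positivity) (by positivity)]
      nlinarith [sq_nonneg ((k:ℝ)+1), sq_nonneg (k:ℝ)]
    linarith
  · have : 1 / ((k : ℝ) + 1) - 2 / (2 * ((k : ℝ) + 2) - 1) ≤ 2 / ((k : ℝ) + 1) ^ 2 := by
      rw [div_sub_div _ _ (ne_of_gt hk1) (ne_of_gt hk3), div_le_div_iff₀ (by positivity) (by positivity)]
      nlinarith [sq_nonneg ((k:ℝ)+1), sq_nonneg (k:ℝ)]
    linarith

private lemma aux_sum_odd (n : ℕ) :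
    ∑ k ∈ Finset.range n, 2 / (2 * ((k : ℝ) + 2) - 1) =
      2 * (harmonic (2 * n + 1) : ℝ) - (harmonic n : ℝ) - 2 := by
  induction n with
  | zero => simp [harmonic_succ]
  | succ n ih =>
      rw [Finset.sum_range_succ, ih]
      have e1 : 2 * (n + 1) + 1 = (2 * n + 1 + 1) + 1 := by ring
      rw [e1, harmonic_succ (2 * n + 1 + 1), harmonic_succ (2 * n + 1), harmonic_succ n]
      push_cast
      have h1 : (2 * (n:ℝ) + 1 + 1) ≠ 0 := by positivity
      have h2 : (2 * (n:ℝ) + 1 + 1 + 1) ≠ 0 := by positivity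
      have h3 : ((n:ℝ) + 1) ≠ 0 := by positivity
      have h4 : (2 * ((n:ℝ) + 2) - 1) ≠ 0 := by nlinarith [n.cast_nonneg (α := ℝ)]
      field_simp
      ring

private lemma aux_key (n : ℕ) :
    ∑ k ∈ Finset.range n,
        (Real.log (((k : ℝ) + 2) / ((k : ℝ) + 1)) - 2 / (2 * ((k : ℝ) + 2) - 1)) =
      2 - 2 * Real.log 2 -
        (2 * Real.eulerMascheroniSeq (2 * n + 1) - Real.eulerMascheroniSeq n) := by
  rw [Finset.sum_sub_distrib, aux_sum_odd]
  have htel : ∑ k ∈ Finset.range n, Real.log (((k : ℝ) + 2) / ((k : ℝ) + 1)) =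
      Real.log ((n : ℝ) + 1) := by
    have h1 : ∀ k ∈ Finset.range n, Real.log (((k : ℝ) + 2) / ((k : ℝ) + 1)) =
        (fun k : ℕ => Real.log ((k : ℝ) + 1)) (k + 1) -
          (fun k : ℕ => Real.log ((k : ℝ) + 1)) k := by
      intro k _
      simp only
      rw [Real.log_div (by positivity) (by positivity)]
      push_cast
      ring_nf
    rw [Finset.sum_congr rfl h1, Finset.sum_range_sub (fun k : ℕ => Real.log ((k : ℝ) + 1)) n]
    norm_num
  rw [htel]
  simp only [Real.eulerMascheroniSeq]
  push_cast
  have hlog : Real.log (2 * (n:ℝ) + 1 + 1) = Real.log 2 + Real.log ((n:ℝ) + 1) := by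
    rw [← Real.log_mul (by norm_num) (by positivity)]
    ring_nf
  rw [hlog]
  ring

theorem stmt_12 :
    Real.eulerMascheroniConstant = 2 - 2 * Real.log 2 -
      ∑' k : ℕ,
        (Real.log (((k : ℝ) + 2) / ((k : ℝ) + 1)) - 2 / (2 * ((k : ℝ) + 2) - 1)) := by
  set a : ℕ → ℝ := fun k =>
    Real.log (((k : ℝ) + 2) / ((k : ℝ) + 1)) - 2 / (2 * ((k : ℝ) + 2) - 1) with ha
  have hcomp : Summable (fun k : ℕ => 2 / ((k : ℝ) + 1) ^ 2) := by
    have h1 : Summable (fun k : ℕ => (1 : ℝ) / (k : ℝ) ^ 2) :=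
      Real.summable_one_div_nat_pow.mpr one_lt_two
    have h2 := ((summable_nat_add_iff 1).mpr h1).mul_left 2
    apply h2.congr
    intro k
    push_cast
    ring
  have hsum : Summable a := by
    apply Summable.of_norm
    exact Summable.of_nonneg_of_le (fun k => norm_nonneg _) (fun k => aux_abs k) hcomp
  have h2n : Tendsto (fun n : ℕ => 2 * n + 1) atTop atTop :=
    tendsto_atTop_mono (fun n => by simp only [id_eq]; omega) tendsto_id
  have hE := Real.tendsto_eulerMascheroniSeq
  have hE2 : Tendsto (fun n : ℕ => Real.eulerMascheroniSeq (2 * n + 1)) atTop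
      (𝓝 Real.eulerMascheroniConstant) := hE.comp h2n
  have hlim : Tendsto (fun n : ℕ => ∑ k ∈ Finset.range n, a k) atTop
      (𝓝 (2 - 2 * Real.log 2 - Real.eulerMascheroniConstant)) := by
    have : Tendsto (fun n : ℕ =>
        2 - 2 * Real.log 2 -
          (2 * Real.eulerMascheroniSeq (2 * n + 1) - Real.eulerMascheroniSeq n)) atTop
        (𝓝 (2 - 2 * Real.log 2 -
          (2 * Real.eulerMascheroniConstant - Real.eulerMascheroniConstant))) :=
      Filter.Tendsto.const_sub _ ((hE2.const_mul 2).sub hE)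
    have heq : (2 : ℝ) - 2 * Real.log 2 -
        (2 * Real.eulerMascheroniConstant - Real.eulerMascheroniConstant) =
        2 - 2 * Real.log 2 - Real.eulerMascheroniConstant := by ring
    rw [heq] at this
    apply this.congr
    intro n
    exact (aux_key n).symm
  have := tendsto_nhds_unique hsum.hasSum.tendsto_sum_nat hlim
  rw [this]
  ring
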